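/- Let D ∈ E^k with embedding dimension d ≤ k-2, let i < j, and consider the pencil D(ε) = D + ε E_{ij}. Let G = K†(D) = Q Λ Qᵀ with Λ = blkdiag(0, Λ₊), Λ₊ ∈ S^d_{++}, and let Ḡ_E = Qᵀ K†(E_{ij}) Q be blocked conformally as [Ḡ₁₁, Ḡ₁₂; Ḡ₁₂ᵀ, Ḡ₂₂] with Ḡ₂₂ of size d. Suppose ε ∈ I_ε (the open interval on which Λ₊ + ε Ḡ₂₂ ≻ 0, which contains 0) and ε(Ḡ₁₁ - ε Ḡ₁₂ (Λ₊ + ε Ḡ₂₂)^{-1} Ḡ₂₁) ⪰ 0. Then D(ε) ∈ E^k and the embedding dimension of D(ε) is at least d. Moreover, if Ḡ₁₁ = 0 then the embedding dimension of D(ε) is exactly d. -/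

import Mathlib

open Matrix BigOperators

noncomputable section

def unitMatG {ι : Type*} [Fintype ι] [DecidableEq ι] (i j : ι) : Matrix ι ι ℝ :=
  Matrix.single i j 1 + Matrix.single j i 1

def Jmat (ι : Type*) [Fintype ι] [DecidableEq ι] : Matrix ι ι ℝ :=
  (1 : Matrix ι ι ℝ) - (Fintype.card ι : ℝ)⁻¹ • Matrix.of (fun _ _ => (1 : ℝ))

/-- `K†(D) = -½ J D J` (for hollow symmetric `D`, the centered Gram matrix). -/
def cKdag {ι : Type*} [Fintype ι] [DecidableEq ι] (D : Matrix ι ι ℝ) : Matrix ι ι ℝ :=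
  (-(1 / 2 : ℝ)) • (Jmat ι * D * Jmat ι)

/-- Schoenberg characterization of the EDM cone: hollow, symmetric, and the
centered Gram matrix is PSD. -/
def IsEDMmat {ι : Type*} [Fintype ι] [DecidableEq ι] (D : Matrix ι ι ℝ) : Prop :=
  D.IsSymm ∧ (∀ i, D i i = 0) ∧ (cKdag D).PosSemidef

/-!
Conjugating by `Q`, `K†(D + ε E_ij) = Q N Qᵀ` with
`N = [ε Ḡ₁₁, ε Ḡ₁₂; ε Ḡ₁₂ᵀ, Λ₊ + ε Ḡ₂₂]`. The corner `Λ₊ + ε Ḡ₂₂` is positive definite, so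
by the Schur complement theorem `N ⪰ 0` iff `ε (Ḡ₁₁ - ε Ḡ₁₂ (Λ₊ + ε Ḡ₂₂)⁻¹ Ḡ₂₁) ⪰ 0`; the
rank of `N` is at least that of its invertible `d × d` corner, with equality when the Schur
complement vanishes. If `Ḡ₁₁ = 0`, the scaled Schur complement is
`-ε² Ḡ₁₂ (Λ₊ + ε Ḡ₂₂)⁻¹ Ḡ₁₂ᵀ ⪯ 0`, hence zero.
-/

section EDM

variable {ι : Type*} [Fintype ι] [DecidableEq ι]

lemma isSymm_unitMatG (i j : ι) : (unitMatG i j).IsSymm := by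
  simp only [IsSymm, unitMatG, transpose_add, transpose_single, add_comm]

lemma unitMatG_apply_self {i j : ι} (hij : i ≠ j) (k : ι) : unitMatG i j k k = 0 := by
  rcases eq_or_ne i k with rfl | hik
  · simp [unitMatG, hij.symm]
  · simp [unitMatG, hik]

lemma Jmat_transpose : (Jmat ι)ᵀ = Jmat ι := by
  ext a b
  simp [Jmat, one_apply, eq_comm]

lemma IsSymm.cKdag {D : Matrix ι ι ℝ} (hD : D.IsSymm) : (cKdag D).IsSymm := by
  simp only [IsSymm, _root_.cKdag, transpose_smul, transpose_mul, Jmat_transpose, hD.eq,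
    Matrix.mul_assoc]

lemma cKdag_add_smul (D E : Matrix ι ι ℝ) (ε : ℝ) :
    cKdag (D + ε • E) = cKdag D + ε • cKdag E := by
  simp only [cKdag, Matrix.mul_add, Matrix.add_mul, Matrix.mul_smul, Matrix.smul_mul, smul_add,
    smul_comm ε]

lemma cKdag_add_smul_eq_mul_mul_transpose {Q : Matrix ι ι ℝ} (hQ : Q * Qᵀ = 1)
    {D E Λ M : Matrix ι ι ℝ} (hD : cKdag D = Q * Λ * Qᵀ) (hE : Qᵀ * cKdag E * Q = M) (ε : ℝ) :
    cKdag (D + ε • E) = Q * (Λ + ε • M) * Qᵀ := by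
  have hE' : cKdag E = Q * M * Qᵀ := by
    rw [← hE, ← Matrix.mul_assoc, ← Matrix.mul_assoc, hQ, Matrix.one_mul, Matrix.mul_assoc, hQ,
      Matrix.mul_one]
  rw [cKdag_add_smul, hD, hE', Matrix.mul_add, Matrix.add_mul, Matrix.mul_smul, Matrix.smul_mul]

lemma IsEDMmat.add_smul_unitMatG {D : Matrix ι ι ℝ} (hD : IsEDMmat D) {i j : ι} (hij : i ≠ j)
    {ε : ℝ} (hpsd : (cKdag (D + ε • unitMatG i j)).PosSemidef) :
    IsEDMmat (D + ε • unitMatG i j) :=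
  ⟨hD.1.add ((isSymm_unitMatG i j).smul ε), fun k => by simp [hD.2.1 k, unitMatG_apply_self hij k],
    hpsd⟩

end EDM

lemma IsSymm.transpose_mul_mul {m n R : Type*} [Fintype m] [CommSemiring R] {A : Matrix m m R}
    (hA : A.IsSymm) (Q : Matrix m n R) : (Qᵀ * A * Q).IsSymm := by
  rw [IsSymm, transpose_mul, transpose_mul, transpose_transpose, hA.eq, Matrix.mul_assoc]

lemma eq_zero_of_posSemidef_of_posSemidef_neg {n : Type*} {A : Matrix n n ℝ} (hA : A.PosSemidef)
    (hneg : (-A).PosSemidef) : A = 0 := by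
  open scoped MatrixOrder in
  exact le_antisymm (by rwa [le_iff, zero_sub]) hA.nonneg

section Rank

variable {m n K : Type*} [Fintype m] [Fintype n] [Field K]

lemma rank_mul_mul_transpose_of_mul_transpose_eq_one [DecidableEq n] {Q : Matrix n n K}
    (hQ : Q * Qᵀ = 1) (N : Matrix n n K) : (Q * N * Qᵀ).rank = N.rank := by
  have hQu : IsUnit Q.det := isUnit_det_of_right_inverse hQ
  rw [Matrix.mul_assoc, rank_mul_eq_right_of_isUnit_det Q _ hQu,
    rank_mul_eq_left_of_isUnit_det _ N (by rwa [det_transpose])]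

lemma rank_toBlocks₂₂_le (M : Matrix (m ⊕ n) (m ⊕ n) K) : M.toBlocks₂₂.rank ≤ M.rank :=
  rank_submatrix_le M Sum.inr Sum.inr

lemma rank_fromBlocks_zero₁₁ [DecidableEq n] (D : Matrix n n K) :
    (fromBlocks (0 : Matrix m m K) 0 0 D).rank = D.rank := by
  refine le_antisymm ?_ (by simpa using rank_toBlocks₂₂_le (fromBlocks (0 : Matrix m m K) 0 0 D))
  calc (fromBlocks (0 : Matrix m m K) 0 0 D).rank
      = (fromRows (0 : Matrix m n K) 1 * D * fromCols (0 : Matrix n m K) 1).rank := by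
        rw [fromRows_mul, fromRows_mul, mul_fromCols, mul_fromCols]
        congr 1
        ext (a | a) (b | b) <;> simp
    _ ≤ D.rank := (rank_mul_le_left _ _).trans (rank_mul_le_right _ _)

lemma rank_fromBlocks_of_eq_mul_inv_mul [DecidableEq m] [DecidableEq n] {A : Matrix m m K}
    {B : Matrix m n K} {C : Matrix n m K} {D : Matrix n n K} (hD : IsUnit D)
    (hA : A = B * D⁻¹ * C) : (fromBlocks A B C D).rank = D.rank := by
  let := hD.invertible
  rw [fromBlocks_eq_of_invertible₂₂, invOf_eq_nonsing_inv, ← hA, sub_self, Matrix.mul_assoc,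
    rank_mul_eq_right_of_isUnit_det _ _ (by simp),
    rank_mul_eq_left_of_isUnit_det _ _ (by simp), rank_fromBlocks_zero₁₁]

lemma rank_fromBlocks_smul_of_smul_schur_eq_zero [DecidableEq m] [DecidableEq n]
    {A : Matrix m m K} {B : Matrix m n K} {C : Matrix n m K} {X : Matrix n n K} (hX : IsUnit X)
    {ε : K} (h : ε • (A - ε • (B * X⁻¹ * C)) = 0) :
    (fromBlocks (ε • A) (ε • B) (ε • C) X).rank = X.rank := by
  refine rank_fromBlocks_of_eq_mul_inv_mul hX ?_
  rw [smul_sub, sub_eq_zero] at h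
  simpa [Matrix.smul_mul, Matrix.mul_smul, smul_smul, Matrix.mul_assoc] using h

end Rank

section Schur

variable {m n : Type*} [Fintype m] [Fintype n] [DecidableEq n]

lemma posSemidef_fromBlocks_smul_iff {A : Matrix m m ℝ} {B : Matrix m n ℝ} {X : Matrix n n ℝ}
    (hX : X.PosDef) (ε : ℝ) :
    (fromBlocks (ε • A) (ε • B) (ε • Bᵀ) X).PosSemidef ↔
      (ε • (A - ε • (B * X⁻¹ * Bᵀ))).PosSemidef := by
  let := hX.isUnit.invertible
  rw [show ε • Bᵀ = (ε • B)ᴴ by simp, PosDef.fromBlocks₂₂ _ _ hX]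
  simp only [conjTranspose_eq_transpose_of_trivial, transpose_smul, smul_sub, Matrix.smul_mul,
    Matrix.mul_smul, smul_smul]

lemma smul_schur_eq_zero_of_posSemidef {B : Matrix m n ℝ} {X : Matrix n n ℝ} (hX : X.PosDef)
    {ε : ℝ} (h : (ε • (0 - ε • (B * X⁻¹ * Bᵀ))).PosSemidef) :
    ε • (0 - ε • (B * X⁻¹ * Bᵀ)) = 0 := by
  refine eq_zero_of_posSemidef_of_posSemidef_neg h ?_
  rw [zero_sub, smul_neg, neg_neg, smul_smul, ← conjTranspose_eq_transpose_of_trivial]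
  exact (hX.inv.posSemidef.mul_mul_conjTranspose_same B).smul (mul_self_nonneg ε)

end Schur

theorem EDM_condition_sufficient_general (s d : ℕ)
    (D : Matrix (Fin s ⊕ Fin d) (Fin s ⊕ Fin d) ℝ) (hD : IsEDMmat D)
    (i j : Fin s ⊕ Fin d) (hij : i ≠ j)
    (Q : Matrix (Fin s ⊕ Fin d) (Fin s ⊕ Fin d) ℝ) (hQ : Q * Qᵀ = 1)
    (Λp : Matrix (Fin d) (Fin d) ℝ)
    (hG : cKdag D = Q * Matrix.fromBlocks 0 0 0 Λp * Qᵀ)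
    (ε : ℝ)
    (G11 : Matrix (Fin s) (Fin s) ℝ) (G12 : Matrix (Fin s) (Fin d) ℝ)
    (G21 : Matrix (Fin d) (Fin s) ℝ) (G22 : Matrix (Fin d) (Fin d) ℝ)
    (h11 : G11 = (Qᵀ * cKdag (unitMatG i j) * Q).toBlocks₁₁)
    (h12 : G12 = (Qᵀ * cKdag (unitMatG i j) * Q).toBlocks₁₂)
    (h21 : G21 = (Qᵀ * cKdag (unitMatG i j) * Q).toBlocks₂₁)
    (h22 : G22 = (Qᵀ * cKdag (unitMatG i j) * Q).toBlocks₂₂)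
    (hIeps : (Λp + ε • G22).PosDef)
    (hSchur : (ε • (G11 - ε • (G12 * (Λp + ε • G22)⁻¹ * G21))).PosSemidef) :
    IsEDMmat (D + ε • unitMatG i j) ∧
    d ≤ (cKdag (D + ε • unitMatG i j)).rank ∧
    (G11 = 0 → (cKdag (D + ε • unitMatG i j)).rank = d) ∧
    (G11 - ε • (G12 * (Λp + ε • G22)⁻¹ * G21) = 0 →
      (cKdag (D + ε • unitMatG i j)).rank = d) := by
  set X := Λp + ε • G22
  have hblocks : Qᵀ * cKdag (unitMatG i j) * Q = fromBlocks G11 G12 G21 G22 := by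
    rw [h11, h12, h21, h22, fromBlocks_toBlocks]
  have hG21 : G21 = G12ᵀ := by
    have hsymm := IsSymm.transpose_mul_mul (IsSymm.cKdag (isSymm_unitMatG i j)) Q
    rw [hblocks, isSymm_fromBlocks_iff] at hsymm
    exact hsymm.2.1.symm
  subst hG21
  have hpencil : cKdag (D + ε • unitMatG i j) =
      Q * fromBlocks (ε • G11) (ε • G12) (ε • G12ᵀ) X * Qᵀ := by
    rw [cKdag_add_smul_eq_mul_mul_transpose hQ hG hblocks, fromBlocks_smul, fromBlocks_add]
    simp [X]
  have hrank_eq : ε • (G11 - ε • (G12 * X⁻¹ * G12ᵀ)) = 0 →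
      (cKdag (D + ε • unitMatG i j)).rank = d := fun h => by
    rw [hpencil, rank_mul_mul_transpose_of_mul_transpose_eq_one hQ,
      rank_fromBlocks_smul_of_smul_schur_eq_zero hIeps.isUnit h, rank_of_isUnit X hIeps.isUnit,
      Fintype.card_fin]
  refine ⟨hD.add_smul_unitMatG hij ?_, ?_, ?_, fun h => hrank_eq (by rw [h, smul_zero])⟩
  · rw [hpencil, ← conjTranspose_eq_transpose_of_trivial Q]
    exact ((posSemidef_fromBlocks_smul_iff hIeps ε).mpr hSchur).mul_mul_conjTranspose_same Q
  · rw [hpencil, rank_mul_mul_transpose_of_mul_transpose_eq_one hQ]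
    simpa [rank_of_isUnit X hIeps.isUnit] using
      rank_toBlocks₂₂_le (fromBlocks (ε • G11) (ε • G12) (ε • G12ᵀ) X)
  · rintro rfl
    exact hrank_eq (smul_schur_eq_zero_of_posSemidef hIeps hSchur)

/-- Sufficiency of the EDM condition: if `ε` lies in the interval where
`Λ₊ + ε Ḡ₂₂ ≻ 0` and the scaled Schur complement is PSD, then
`D(ε) = D + ε E_{ij}` is an EDM of embedding dimension at least `d`;
if moreover `Ḡ₁₁ = 0`, the embedding dimension is exactly `d`. -/
theorem EDM_condition_sufficient (s d : ℕ) (hs : 2 ≤ s)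
    (D : Matrix (Fin s ⊕ Fin d) (Fin s ⊕ Fin d) ℝ) (hD : IsEDMmat D)
    (hrank : (cKdag D).rank = d)
    (i j : Fin s ⊕ Fin d) (hij : i ≠ j)
    (Q : Matrix (Fin s ⊕ Fin d) (Fin s ⊕ Fin d) ℝ) (hQ : Q * Qᵀ = 1)
    (Λp : Matrix (Fin d) (Fin d) ℝ) (hΛp : Λp.PosDef)
    (hG : cKdag D = Q * Matrix.fromBlocks 0 0 0 Λp * Qᵀ)
    (ε : ℝ) (hε : ε ≠ 0)
    (G11 : Matrix (Fin s) (Fin s) ℝ) (G12 : Matrix (Fin s) (Fin d) ℝ)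
    (G21 : Matrix (Fin d) (Fin s) ℝ) (G22 : Matrix (Fin d) (Fin d) ℝ)
    (h11 : G11 = (Qᵀ * cKdag (unitMatG i j) * Q).toBlocks₁₁)
    (h12 : G12 = (Qᵀ * cKdag (unitMatG i j) * Q).toBlocks₁₂)
    (h21 : G21 = (Qᵀ * cKdag (unitMatG i j) * Q).toBlocks₂₁)
    (h22 : G22 = (Qᵀ * cKdag (unitMatG i j) * Q).toBlocks₂₂)
    (hIeps : (Λp + ε • G22).PosDef)
    (hSchur : (ε • (G11 - ε • (G12 * (Λp + ε • G22)⁻¹ * G21))).PosSemidef) :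
    IsEDMmat (D + ε • unitMatG i j) ∧
    d ≤ (cKdag (D + ε • unitMatG i j)).rank ∧
    (G11 = 0 → (cKdag (D + ε • unitMatG i j)).rank = d) ∧
    (G11 - ε • (G12 * (Λp + ε • G22)⁻¹ * G21) = 0 →
      (cKdag (D + ε • unitMatG i j)).rank = d) :=
  EDM_condition_sufficient_general s d D hD i j hij Q hQ Λp hG ε G11 G12 G21 G22 h11 h12 h21 h22
    hIeps hSchur
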